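/- arXiv:2112.11905 — 2 statements merged into one kernel-verified Lean document; each statement's English description precedes it below -/
import Mathlib

section
/- Let I be a nonempty index set, let Σ be a subcomplex of Σ(I) equipped with the ℓ₂-metric, let X be a c-quasiconvex metric space (c ≥ 1), and let h : |Σ| → X be a homeomorphism which is D-bilipschitz on every face of Σ (D ≥ 1). Then h is (cD)-bilipschitz as a map from (|Σ|, d_i) to X, i.e. (cD)^{-1}·d_i(z, z') ≤ d(h(z), h(z')) ≤ cD·d_i(z, z') for all z, z' ∈ |Σ|. -/
open Set Metric Filter MeasureTheory
open scoped ENNReal NNReal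

noncomputable section

/-- The real Hilbert space `ℓ₂(I)`. -/
abbrev L2 (I : Type*) := lp (fun _ : I => ℝ) 2

/-- The standard unit vector `e_i ∈ ℓ₂(I)`. -/
noncomputable def stdVec {I : Type*} (i : I) : L2 I :=
  letI := Classical.decEq I; lp.single 2 i 1

/-- The (closed) face of the full complex `Σ(I)` spanned by the vertices `e_i`, `i ∈ s`:
the convex hull of the corresponding standard unit vectors. -/
def faceSet {I : Type*} (s : Finset I) : Set (L2 I) := convexHull ℝ (stdVec '' (s : Set I))

/-- `x` lies in the relative interior of the face spanned by `s`. -/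
def memRelInt {I : Type*} (s : Finset I) (x : L2 I) : Prop :=
  x ∈ faceSet s ∧ ∀ i ∈ s, 0 < x i

/-- A subcomplex of the full complex `Σ(I)`, encoded by the collection of the vertex sets of
its faces: a nonempty collection of finite nonempty subsets of `I`, closed under passing to
nonempty subsets. -/
structure IsSubcomplex {I : Type*} (F : Set (Finset I)) : Prop where
  nonempty : F.Nonempty
  faces_nonempty : ∀ s ∈ F, s.Nonempty
  down_closed : ∀ s ∈ F, ∀ t : Finset I, t.Nonempty → t ⊆ s → t ∈ F

/-- The underlying set `|Σ| ⊆ ℓ₂(I)` of a (sub)complex: the union of its faces. -/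
def cpxCarrier {I : Type*} (F : Set (Finset I)) : Set (L2 I) := ⋃ s ∈ F, faceSet s

/-- The open star of the face with vertex set `s` in the complex `F`: the union of the
relative interiors of all faces of `F` containing it. -/
def openStar {I : Type*} (F : Set (Finset I)) (s : Finset I) : Set (L2 I) :=
  ⋃ t ∈ F, ⋃ (_ : s ⊆ t), {x | memRelInt t x}

/-- The smallest subcomplex of `F` whose underlying set contains `A`
(encoded by its collection of faces). -/
def hullFaces {I : Type*} (F : Set (Finset I)) (A : Set (L2 I)) : Set (Finset I) :=
  ⋂₀ {G : Set (Finset I) | G ⊆ F ∧ IsSubcomplex G ∧ A ⊆ cpxCarrier G}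

/-- The pointwise (lower) Lipschitz constant at `x` of the restriction of `f` to `S`:
`liminf_{s → 0+} s⁻¹ · sup { d(f x, f y) : y ∈ S, d(x,y) < s }`, valued in `ℝ≥0∞`. -/
noncomputable def lipWithin {X Y : Type*} [PseudoMetricSpace X] [PseudoMetricSpace Y]
    (f : X → Y) (S : Set X) (x : X) : ℝ≥0∞ :=
  Filter.liminf
    (fun s : ℝ => (⨆ y ∈ S ∩ Metric.ball x s, edist (f x) (f y)) / ENNReal.ofReal s)
    (nhdsWithin 0 (Set.Ioi 0))

/-- The pointwise (lower) Lipschitz constant `lip f (x)`, valued in `ℝ≥0∞`. -/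
noncomputable def plip {X Y : Type*} [PseudoMetricSpace X] [PseudoMetricSpace Y]
    (f : X → Y) (x : X) : ℝ≥0∞ := lipWithin f Set.univ x

/-- A subset `S` of a metric space is `c`-quasiconvex: any two of its points are joined by a
continuous curve in `S` of length (total variation) at most `c` times their distance. -/
def QuasiconvexSet {X : Type*} [PseudoMetricSpace X] (S : Set X) (c : ℝ) : Prop :=
  ∀ x ∈ S, ∀ y ∈ S, ∃ γ : ℝ → X, ContinuousOn γ (Set.Icc 0 1) ∧
    Set.MapsTo γ (Set.Icc 0 1) S ∧ γ 0 = x ∧ γ 1 = y ∧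
    eVariationOn γ (Set.Icc 0 1) ≤ ENNReal.ofReal (c * dist x y)

/-- The intrinsic (length) metric of `S`: the infimal length of continuous curves in `S`
joining `x` and `y`, valued in `ℝ≥0∞` (with `inf ∅ = ∞`). -/
noncomputable def intrinsicDist {X : Type*} [PseudoMetricSpace X] (S : Set X) (x y : X) : ℝ≥0∞ :=
  ⨅ (γ : ℝ → X) (_ : ContinuousOn γ (Set.Icc 0 1) ∧ Set.MapsTo γ (Set.Icc 0 1) S ∧
      γ 0 = x ∧ γ 1 = y),
    eVariationOn γ (Set.Icc 0 1)

/-- `X` has Nagata dimension `≤ n` with constant `c`: for every `s > 0` there is a covering of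
`X` by sets of diameter `≤ c·s` such that every set of diameter `≤ s` meets at most `n + 1`
members of the covering. -/
def NagataDimLE (X : Type*) [PseudoMetricSpace X] (n : ℕ) (c : ℝ) : Prop :=
  ∀ s : ℝ, 0 < s → ∃ B : Set (Set X),
    (∀ x : X, ∃ b ∈ B, x ∈ b) ∧
    (∀ b ∈ B, EMetric.diam b ≤ ENNReal.ofReal (c * s)) ∧
    (∀ A : Set X, EMetric.diam A ≤ ENNReal.ofReal s →
      {b | b ∈ B ∧ (b ∩ A).Nonempty}.encard ≤ (n : ℕ∞) + 1)

/-- `Y` is Lipschitz `k`-connected with constant `lam`: for `0 ≤ m ≤ k`, every `L`-Lipschitz map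
from the unit sphere `S^m ⊆ ℝ^{m+1}` to `Y` extends to a `lam·L`-Lipschitz map on the closed
unit ball `B^{m+1}`. -/
def LipschitzConnectedWith (Y : Type*) [PseudoMetricSpace Y] (k : ℕ) (lam : ℝ) : Prop :=
  ∀ m : ℕ, m ≤ k → ∀ L : ℝ, 0 < L →
    ∀ f : EuclideanSpace ℝ (Fin (m + 1)) → Y,
      LipschitzOnWith (Real.toNNReal L) f (Metric.sphere 0 1) →
      ∃ g : EuclideanSpace ℝ (Fin (m + 1)) → Y,
        LipschitzOnWith (Real.toNNReal (lam * L)) g (Metric.closedBall 0 1) ∧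
        Set.EqOn f g (Metric.sphere 0 1)

end

/-! Each point `x` of a face lies in every face meeting the ball around `x` whose radius is the
smallest positive barycentric coordinate of `x`. Hence along a continuous curve in `|Σ|` every
parameter has a neighbourhood whose points are mapped into a face shared with it, and there `h`
and `h⁻¹` are `D`-Lipschitz. A continuous induction over the parameter interval (run up to the
supremum of the good parameters) turns these local comparisons into `Var (h ∘ γ) ≤ D · Var γ` and
`Var (h⁻¹ ∘ σ) ≤ D · Var σ`. The first bound, minimised over curves `γ` in `|Σ|`, gives
`d(h z, h z') ≤ D · d_i(z, z')`; the second, applied to a `c`-quasiconvex curve `σ` from `h z`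
to `h z'`, gives `d_i(z, z') ≤ c D · d(h z, h z')`. -/

open Topology

section Simplex

variable {I : Type*}

lemma stdVec_apply_self (i : I) : stdVec i i = 1 := by
  classical exact lp.single_apply_self _ _ _

lemma stdVec_apply_of_ne {i j : I} (h : j ≠ i) : stdVec i j = 0 := by
  classical exact lp.single_apply_ne _ _ _ h

lemma abs_apply_sub_apply_le_dist (x y : L2 I) (i : I) : |x i - y i| ≤ dist x y := by
  simpa [dist_eq_norm] using lp.norm_apply_le_norm two_ne_zero (x - y) i

lemma convex_setOf_simplexCoords (s : Finset I) :
    Convex ℝ {x : L2 I | (∀ i, 0 ≤ x i) ∧ (∀ i ∉ s, x i = 0) ∧ ∑ i ∈ s, x i = 1} := by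
  rintro x ⟨hx0, hxs, hx1⟩ y ⟨hy0, hys, hy1⟩ a b ha hb hab
  simp only [mem_ofPred_eq, lp.coeFn_add, lp.coeFn_smul, Pi.add_apply, Pi.smul_apply, smul_eq_mul]
  refine ⟨fun i => add_nonneg (mul_nonneg ha (hx0 i)) (mul_nonneg hb (hy0 i)),
    fun i hi => by simp [hxs i hi, hys i hi], ?_⟩
  rw [Finset.sum_add_distrib, ← Finset.mul_sum, ← Finset.mul_sum, hx1, hy1]
  linarith

lemma mem_faceSet_iff {s : Finset I} {x : L2 I} :
    x ∈ faceSet s ↔ (∀ i, 0 ≤ x i) ∧ (∀ i ∉ s, x i = 0) ∧ ∑ i ∈ s, x i = 1 := by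
  constructor
  · refine fun hx => convexHull_min ?_ (convex_setOf_simplexCoords s) hx
    rintro _ ⟨i, hi, rfl⟩
    refine ⟨fun j => ?_, fun j hj => stdVec_apply_of_ne (ne_of_mem_of_not_mem hi hj).symm, ?_⟩
    · rcases eq_or_ne j i with rfl | hji
      · simp [stdVec_apply_self]
      · simp [stdVec_apply_of_ne hji]
    · rw [Finset.sum_eq_single_of_mem i hi fun j _ => stdVec_apply_of_ne]
      exact stdVec_apply_self i
  · rintro ⟨hx0, hxs, hx1⟩
    have hx : x = ∑ i ∈ s, x i • stdVec i := by
      ext j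
      simp only [lp.coeFn_sum, Finset.sum_apply, lp.coeFn_smul, Pi.smul_apply, smul_eq_mul]
      by_cases hj : j ∈ s
      · rw [Finset.sum_eq_single_of_mem j hj fun i _ hij => by
          rw [stdVec_apply_of_ne hij.symm, mul_zero], stdVec_apply_self, mul_one]
      · rw [hxs j hj, Finset.sum_eq_zero fun i hi => by
          rw [stdVec_apply_of_ne (ne_of_mem_of_not_mem hi hj).symm, mul_zero]]
    rw [hx]
    exact (convex_convexHull ℝ _).sum_mem (fun i _ => hx0 i) hx1
      fun i hi => subset_convexHull ℝ _ (mem_image_of_mem _ hi)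

lemma mem_faceSet_of_apply_ne_zero {s t : Finset I} {x : L2 I} (hx : x ∈ faceSet s)
    (hxt : ∀ i, x i ≠ 0 → i ∈ t) : x ∈ faceSet t := by
  classical
  obtain ⟨hx0, hxs, hx1⟩ := mem_faceSet_iff.mp hx
  have hxt' : ∀ i ∉ t, x i = 0 := fun i hi => by_contra fun h => hi (hxt i h)
  refine mem_faceSet_iff.mpr ⟨hx0, hxt', ?_⟩
  rw [← hx1, Finset.sum_subset Finset.subset_union_left fun i _ hi => hxs i hi,
    Finset.sum_subset Finset.subset_union_right fun i _ hi => hxt' i hi]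

lemma exists_pos_forall_dist_lt_mem_faceSet {s : Finset I} {x : L2 I} (hx : x ∈ faceSet s) :
    ∃ δ > 0, ∀ (t : Finset I) (y : L2 I), y ∈ faceSet t → dist x y < δ → x ∈ faceSet t := by
  classical
  obtain ⟨hx0, hxs, hx1⟩ := mem_faceSet_iff.mp hx
  set supp := s.filter fun i => 0 < x i
  have hsupp : ∀ i, x i ≠ 0 → i ∈ supp := fun i hi =>
    Finset.mem_filter.mpr ⟨by_contra fun h => hi (hxs i h), (hx0 i).lt_of_ne' hi⟩
  have hne : supp.Nonempty := by
    by_contra hempty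
    have : ∑ i ∈ s, x i = 0 := Finset.sum_eq_zero fun i _ => by_contra fun h =>
      hempty ⟨i, hsupp i h⟩
    linarith
  refine ⟨supp.inf' hne x, (Finset.lt_inf'_iff hne).mpr fun i hi => (Finset.mem_filter.mp hi).2,
    fun t y hy hxy => mem_faceSet_of_apply_ne_zero hx fun i hi => by_contra fun hit => ?_⟩
  have hyi : y i = 0 := (mem_faceSet_iff.mp hy).2.1 i hit
  have hxi := abs_apply_sub_apply_le_dist x y i
  rw [hyi, sub_zero, abs_of_nonneg (hx0 i)] at hxi
  linarith [Finset.inf'_le x (hsupp i hi)]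

lemma mem_cpxCarrier_iff {F : Set (Finset I)} {x : L2 I} :
    x ∈ cpxCarrier F ↔ ∃ s ∈ F, x ∈ faceSet s := by
  simp [cpxCarrier]

lemma eventually_exists_faceSet_of_mem_cpxCarrier {F : Set (Finset I)} {x : L2 I}
    (hx : x ∈ cpxCarrier F) :
    ∀ᶠ y in 𝓝[cpxCarrier F] x, ∃ s ∈ F, x ∈ faceSet s ∧ y ∈ faceSet s := by
  obtain ⟨s, -, hxs⟩ := mem_cpxCarrier_iff.mp hx
  obtain ⟨δ, hδ, hmem⟩ := exists_pos_forall_dist_lt_mem_faceSet hxs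
  filter_upwards [self_mem_nhdsWithin, mem_nhdsWithin_of_mem_nhds (ball_mem_nhds x hδ)]
    with y hy hyx
  obtain ⟨t, ht, hyt⟩ := mem_cpxCarrier_iff.mp hy
  exact ⟨t, ht, hmem t y hyt (by rwa [dist_comm]), hyt⟩

lemma ContinuousOn.eventually_exists_faceSet {F : Set (Finset I)} {γ : ℝ → L2 I} {S : Set ℝ}
    (hγ : ContinuousOn γ S) (hmaps : MapsTo γ S (cpxCarrier F)) {t : ℝ} (ht : t ∈ S) :
    ∀ᶠ t' in 𝓝[S] t, ∃ s ∈ F, γ t ∈ faceSet s ∧ γ t' ∈ faceSet s :=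
  ((hγ t ht).tendsto_nhdsWithin hmaps).eventually
    (eventually_exists_faceSet_of_mem_cpxCarrier (hmaps ht))

end Simplex

section Variation

variable {α β : Type*} [PseudoEMetricSpace α] [PseudoEMetricSpace β] {g : ℝ → β} {γ : ℝ → α}
  {K : ℝ≥0∞} {a b : ℝ}

lemma edist_le_mul_eVariationOn_of_eventually (hab : a ≤ b)
    (hloc : ∀ t ∈ Icc a b, ∀ᶠ t' in 𝓝[Icc a b] t, edist (g t) (g t') ≤ K * edist (γ t) (γ t')) :
    edist (g a) (g b) ≤ K * eVariationOn γ (Icc a b) := by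
  set S := {r ∈ Icc a b | edist (g a) (g r) ≤ K * eVariationOn γ (Icc a r)}
  have extend : ∀ r ∈ S, ∀ r' ∈ Icc a b, r ≤ r' →
      edist (g r) (g r') ≤ K * edist (γ r) (γ r') → r' ∈ S := by
    rintro r ⟨hr, hgr⟩ r' hr' hrr' hstep
    refine ⟨hr', ?_⟩
    have hadd := eVariationOn.Icc_add_Icc γ (s := univ) hr.1 hrr' (mem_univ r)
    simp only [univ_inter] at hadd
    have hγ := eVariationOn.edist_le γ (left_mem_Icc.2 hrr') (right_mem_Icc.2 hrr')
    calc edist (g a) (g r') ≤ edist (g a) (g r) + edist (g r) (g r') := edist_triangle _ _ _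
      _ ≤ K * eVariationOn γ (Icc a r) + K * eVariationOn γ (Icc r r') := by
        gcongr
        exact hstep.trans (by gcongr)
      _ = K * eVariationOn γ (Icc a r') := by rw [← mul_add, hadd]
  have haS : a ∈ S := ⟨left_mem_Icc.2 hab, by simp⟩
  have hbdd : BddAbove S := ⟨b, fun r hr => hr.1.2⟩
  set T := sSup S
  have hT : T ∈ Icc a b := ⟨le_csSup hbdd haS, csSup_le ⟨a, haS⟩ fun r hr => hr.1.2⟩
  obtain ⟨ε, hε, hnear⟩ :=
    Metric.eventually_nhds_iff.mp (eventually_nhdsWithin_iff.mp (hloc T hT))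
  have hTS : T ∈ S := by
    obtain ⟨r, hrS, hr⟩ := exists_lt_of_lt_csSup ⟨a, haS⟩ (sub_lt_self T hε)
    have hrT : r ≤ T := le_csSup hbdd hrS
    refine extend r hrS T hT hrT ?_
    rw [edist_comm, edist_comm (γ r)]
    exact hnear (by rw [Real.dist_eq, abs_sub_comm, abs_of_nonneg (by linarith)]; linarith) hrS.1
  have hTb : T = b := by
    by_contra hTb
    set r' := min b (T + ε / 2)
    have hTr' : T < r' := lt_min (hT.2.lt_of_ne hTb) (by linarith)
    have hr' : r' ∈ Icc a b := ⟨hT.1.trans hTr'.le, min_le_left _ _⟩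
    have hr'S : r' ∈ S := extend T hTS r' hr' hTr'.le (hnear (by
      rw [Real.dist_eq, abs_of_nonneg (by linarith)]
      linarith [min_le_right b (T + ε / 2)]) hr')
    exact (le_csSup hbdd hr'S).not_gt hTr'
  exact hTb ▸ hTS.2

lemma eVariationOn_le_mul_of_eventually
    (hloc : ∀ t ∈ Icc a b, ∀ᶠ t' in 𝓝[Icc a b] t, edist (g t) (g t') ≤ K * edist (γ t) (γ t')) :
    eVariationOn g (Icc a b) ≤ K * eVariationOn γ (Icc a b) := by
  refine iSup_le fun ⟨n, u, hu, hus⟩ => ?_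
  have hsub : ∀ i, Icc (u i) (u (i + 1)) ⊆ Icc a b := fun i => Icc_subset_Icc (hus i).1 (hus _).2
  calc ∑ i ∈ Finset.range n, edist (g (u (i + 1))) (g (u i))
      ≤ ∑ i ∈ Finset.range n, K * eVariationOn γ (Icc (u i) (u (i + 1))) := by
        refine Finset.sum_le_sum fun i _ => ?_
        rw [edist_comm]
        exact edist_le_mul_eVariationOn_of_eventually (hu i.le_succ) fun t ht =>
          (hloc t (hsub i ht)).filter_mono (nhdsWithin_mono t (hsub i))
    _ = K * eVariationOn γ (Icc (u 0) (u n)) := by rw [← Finset.mul_sum, eVariationOn.sum' γ hu]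
    _ ≤ K * eVariationOn γ (Icc a b) := by
        gcongr
        exact eVariationOn.mono γ (Icc_subset_Icc (hus 0).1 (hus n).2)

end Variation

lemma edist_le_ofReal_mul_edist {α β : Type*} [PseudoMetricSpace α] [PseudoMetricSpace β]
    {x y : α} {x' y' : β} {D : ℝ} (hD : 0 ≤ D) (h : dist x y ≤ D * dist x' y') :
    edist x y ≤ ENNReal.ofReal D * edist x' y' := by
  rw [edist_dist, edist_dist, ← ENNReal.ofReal_mul hD]
  exact ENNReal.ofReal_le_ofReal h

section Curve

variable {I Y : Type*} {F : Set (Finset I)} {γ : ℝ → L2 I} {a b : ℝ} {K : ℝ≥0∞}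

lemma edist_le_mul_eVariationOn_of_faceSet [PseudoEMetricSpace Y] (hab : a ≤ b)
    (hγ : ContinuousOn γ (Icc a b)) (hmaps : MapsTo γ (Icc a b) (cpxCarrier F)) {g : ℝ → Y}
    (hg : ∀ s ∈ F, ∀ t ∈ Icc a b, ∀ t' ∈ Icc a b, γ t ∈ faceSet s → γ t' ∈ faceSet s →
      edist (g t) (g t') ≤ K * edist (γ t) (γ t')) :
    edist (g a) (g b) ≤ K * eVariationOn γ (Icc a b) :=
  edist_le_mul_eVariationOn_of_eventually hab fun t ht => by
    filter_upwards [hγ.eventually_exists_faceSet hmaps ht, self_mem_nhdsWithin]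
      with t' ⟨s, hs, hts, ht's⟩ ht'
    exact hg s hs t ht t' ht' hts ht's

lemma eVariationOn_le_mul_of_faceSet [PseudoEMetricSpace Y] (hγ : ContinuousOn γ (Icc a b))
    (hmaps : MapsTo γ (Icc a b) (cpxCarrier F)) {σ : ℝ → Y}
    (hσ : ∀ s ∈ F, ∀ t ∈ Icc a b, ∀ t' ∈ Icc a b, γ t ∈ faceSet s → γ t' ∈ faceSet s →
      edist (γ t) (γ t') ≤ K * edist (σ t) (σ t')) :
    eVariationOn γ (Icc a b) ≤ K * eVariationOn σ (Icc a b) :=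
  eVariationOn_le_mul_of_eventually fun t ht => by
    filter_upwards [hγ.eventually_exists_faceSet hmaps ht, self_mem_nhdsWithin]
      with t' ⟨s, hs, hts, ht's⟩ ht'
    exact hσ s hs t ht t' ht' hts ht's

variable [PseudoMetricSpace Y] {D : ℝ}

lemma ofReal_dist_le_mul_intrinsicDist (f : ↥(cpxCarrier F) → Y) (hD : 0 < D)
    (hf : ∀ s ∈ F, ∀ z z' : ↥(cpxCarrier F), (z : L2 I) ∈ faceSet s → (z' : L2 I) ∈ faceSet s →
      dist (f z) (f z') ≤ D * dist z z')
    (z z' : ↥(cpxCarrier F)) :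
    ENNReal.ofReal (dist (f z) (f z')) ≤
      ENNReal.ofReal D * intrinsicDist (cpxCarrier F) (z : L2 I) (z' : L2 I) := by
  classical
  simp only [intrinsicDist,
    ENNReal.mul_iInf_of_ne (ENNReal.ofReal_pos.mpr hD).ne' ENNReal.ofReal_ne_top]
  refine le_iInf₂ fun γ ⟨hγc, hγm, hγ0, hγ1⟩ => ?_
  let g : ℝ → Y := fun t => if ht : γ t ∈ cpxCarrier F then f ⟨γ t, ht⟩ else f z
  calc ENNReal.ofReal (dist (f z) (f z')) = edist (g 0) (g 1) := by
        simp [g, hγ0, hγ1, edist_dist]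
    _ ≤ ENNReal.ofReal D * eVariationOn γ (Icc 0 1) :=
        edist_le_mul_eVariationOn_of_faceSet zero_le_one hγc hγm
          fun s hs t ht t' ht' hts ht's => by
            simp only [g, dif_pos (hγm ht), dif_pos (hγm ht')]
            exact edist_le_ofReal_mul_edist hD.le (hf s hs _ _ hts ht's)

lemma intrinsicDist_le_mul_of_quasiconvexSet {c : ℝ} (hY : QuasiconvexSet (univ : Set Y) c)
    {e : Y → ↥(cpxCarrier F)} (he : Continuous e) (hD : 0 ≤ D)
    (he_lip : ∀ s ∈ F, ∀ y y' : Y, (e y : L2 I) ∈ faceSet s → (e y' : L2 I) ∈ faceSet s →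
      dist (e y) (e y') ≤ D * dist y y')
    (y y' : Y) :
    intrinsicDist (cpxCarrier F) (e y : L2 I) (e y' : L2 I) ≤
      ENNReal.ofReal D * ENNReal.ofReal (c * dist y y') := by
  obtain ⟨σ, hσc, -, hσ0, hσ1, hσvar⟩ := hY y trivial y' trivial
  let γ : ℝ → L2 I := fun t => e (σ t)
  have hγc : ContinuousOn γ (Icc 0 1) :=
    continuous_subtype_val.comp_continuousOn (he.comp_continuousOn hσc)
  have hγm : MapsTo γ (Icc 0 1) (cpxCarrier F) := fun t _ => (e (σ t)).2
  calc intrinsicDist (cpxCarrier F) (e y) (e y') ≤ eVariationOn γ (Icc 0 1) :=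
        iInf₂_le γ ⟨hγc, hγm, by simp [γ, hσ0], by simp [γ, hσ1]⟩
    _ ≤ ENNReal.ofReal D * eVariationOn σ (Icc 0 1) :=
        eVariationOn_le_mul_of_faceSet hγc hγm fun s hs t _ t' _ hts ht's =>
          edist_le_ofReal_mul_edist hD (he_lip s hs _ _ hts ht's)
    _ ≤ ENNReal.ofReal D * ENNReal.ofReal (c * dist y y') := by gcongr

end Curve

theorem stmt_6_general {I : Type*} {X : Type*} [MetricSpace X]
    (F : Set (Finset I))
    (c D : ℝ) (hc : 1 ≤ c) (hD : 1 ≤ D)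
    (h : ↥(cpxCarrier F) ≃ₜ X)
    (hbil : ∀ s ∈ F, ∀ z z' : ↥(cpxCarrier F), (z : L2 I) ∈ faceSet s →
      (z' : L2 I) ∈ faceSet s →
      D⁻¹ * dist z z' ≤ dist (h z) (h z') ∧ dist (h z) (h z') ≤ D * dist z z')
    (hqc : QuasiconvexSet (Set.univ : Set X) c) :
    ∀ z z' : ↥(cpxCarrier F),
      ENNReal.ofReal (dist (h z) (h z')) ≤
          ENNReal.ofReal (c * D) * intrinsicDist (cpxCarrier F) (z : L2 I) (z' : L2 I) ∧
      intrinsicDist (cpxCarrier F) (z : L2 I) (z' : L2 I) ≤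
          ENNReal.ofReal (c * D) * ENNReal.ofReal (dist (h z) (h z')) := by
  have hD0 : 0 < D := one_pos.trans_le hD
  have hsymm_lip : ∀ s ∈ F, ∀ x x' : X, ((h.symm x : ↥(cpxCarrier F)) : L2 I) ∈ faceSet s →
      ((h.symm x' : ↥(cpxCarrier F)) : L2 I) ∈ faceSet s →
      dist (h.symm x) (h.symm x') ≤ D * dist x x' := fun s hs x x' hx hx' => by
    simpa only [h.apply_symm_apply, inv_mul_le_iff₀ hD0] using (hbil s hs _ _ hx hx').1
  intro z z'
  constructor
  · calc ENNReal.ofReal (dist (h z) (h z'))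
        ≤ ENNReal.ofReal D * intrinsicDist (cpxCarrier F) z z' :=
          ofReal_dist_le_mul_intrinsicDist h hD0 (fun s hs z z' hz hz' => (hbil s hs z z' hz hz').2)
            z z'
      _ ≤ ENNReal.ofReal (c * D) * intrinsicDist (cpxCarrier F) z z' := by
          gcongr
          exact le_mul_of_one_le_left hD0.le hc
  · calc intrinsicDist (cpxCarrier F) z z'
        = intrinsicDist (cpxCarrier F) (h.symm (h z)) (h.symm (h z')) := by simp
      _ ≤ ENNReal.ofReal D * ENNReal.ofReal (c * dist (h z) (h z')) :=
          intrinsicDist_le_mul_of_quasiconvexSet hqc h.symm.continuous hD0.le hsymm_lip _ _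
      _ = ENNReal.ofReal (c * D) * ENNReal.ofReal (dist (h z) (h z')) := by
          rw [← ENNReal.ofReal_mul hD0.le,
            ← ENNReal.ofReal_mul (mul_pos (one_pos.trans_le hc) hD0).le, mul_left_comm, mul_assoc]

/-- If `h : |Σ| → X` is a homeomorphism which is `D`-bilipschitz on every face
and `X` is `c`-quasiconvex, then `h` is `(c·D)`-bilipschitz from `(|Σ|, d_i)` to `X`, i.e.
`(cD)⁻¹·d_i(z,z') ≤ d(h z, h z') ≤ cD·d_i(z,z')` for all `z, z' ∈ |Σ|` (stated in `ℝ≥0∞`). -/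
theorem stmt_6 {I : Type*} [Nonempty I] {X : Type*} [MetricSpace X]
    (F : Set (Finset I)) (hF : IsSubcomplex F)
    (c D : ℝ) (hc : 1 ≤ c) (hD : 1 ≤ D)
    (h : ↥(cpxCarrier F) ≃ₜ X)
    (hbil : ∀ s ∈ F, ∀ z z' : ↥(cpxCarrier F), (z : L2 I) ∈ faceSet s →
      (z' : L2 I) ∈ faceSet s →
      D⁻¹ * dist z z' ≤ dist (h z) (h z') ∧ dist (h z) (h z') ≤ D * dist z z')
    (hqc : QuasiconvexSet (Set.univ : Set X) c) :
    ∀ z z' : ↥(cpxCarrier F),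
      ENNReal.ofReal (dist (h z) (h z')) ≤
          ENNReal.ofReal (c * D) * intrinsicDist (cpxCarrier F) (z : L2 I) (z' : L2 I) ∧
      intrinsicDist (cpxCarrier F) (z : L2 I) (z' : L2 I) ≤
          ENNReal.ofReal (c * D) * ENNReal.ofReal (dist (h z) (h z')) :=
  stmt_6_general F c D hc hD h hbil hqc
end

section
/- For every integer n ≥ 0 there exists a constant C ≥ 1 depending only on n such that for every nonempty index set J, the underlying set of the (n+1)-skeleton Σ^{(n+1)}(J) of the full complex Σ(J), equipped with the ℓ₂-metric, is C-quasiconvex: any two of its points x, y can be joined by a continuous curve in |Σ^{(n+1)}(J)| of length at most C·‖x − y‖. -/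
open Set Metric Filter MeasureTheory
open scoped ENNReal NNReal

universe u

/-!
Write `x ∈ faceSet s`, `y ∈ faceSet t` with `|s|, |t| ≤ k = n + 2`. Since `y` vanishes off `t`,
the barycentric mass of `x` on `s \ t` is at most `|s| · ‖x - y‖`. If `s` and `t` share a vertex
`e_i`, moving that mass onto `e_i` costs at most twice as much and lands in the face `s ∩ t`;
doing the same for `y` joins `x` and `y` by three segments, each inside a face. If `s` and `t` are
disjoint, that mass is all of it, so `‖x - y‖ ≥ 1 / k`, and the path `x → e_i → e_j → y`
(`i ∈ s`, `j ∈ t`), of length at most `6`, is short enough.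
-/

def JoinedInLengthLE {X : Type*} [PseudoEMetricSpace X] (S : Set X) (L : ℝ≥0∞) (x y : X) :
    Prop :=
  ∃ γ : ℝ → X, ContinuousOn γ (Icc 0 1) ∧ MapsTo γ (Icc 0 1) S ∧ γ 0 = x ∧ γ 1 = y ∧
    eVariationOn γ (Icc 0 1) ≤ L

namespace JoinedInLengthLE

variable {X : Type*} [PseudoEMetricSpace X] {S T : Set X} {L L₁ L₂ : ℝ≥0∞} {x y z : X}

theorem mono (h : JoinedInLengthLE S L x y) (hST : S ⊆ T) {L' : ℝ≥0∞} (hL : L ≤ L') :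
    JoinedInLengthLE T L' x y := by
  obtain ⟨γ, hc, hm, h0, h1, hv⟩ := h
  exact ⟨γ, hc, hm.mono_right hST, h0, h1, hv.trans hL⟩

theorem trans (h₁ : JoinedInLengthLE S L₁ x y) (h₂ : JoinedInLengthLE S L₂ y z) :
    JoinedInLengthLE S (L₁ + L₂) x z := by
  obtain ⟨γ₁, hc₁, hm₁, h0₁, h1₁, hv₁⟩ := h₁
  obtain ⟨γ₂, hc₂, hm₂, h0₂, h1₂, hv₂⟩ := h₂
  set γ : ℝ → X := fun t => if t ≤ 1 / 2 then γ₁ (2 * t) else γ₂ (2 * t - 1) with hγ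
  have hφ₁ : MapsTo (fun t : ℝ => 2 * t) (Icc 0 (1 / 2)) (Icc 0 1) :=
    fun t ht => ⟨by linarith [ht.1], by linarith [ht.2]⟩
  have hφ₂ : MapsTo (fun t : ℝ => 2 * t - 1) (Icc (1 / 2) 1) (Icc 0 1) :=
    fun t ht => ⟨by linarith [ht.1], by linarith [ht.2]⟩
  have hγ₁ : EqOn γ (γ₁ ∘ fun t => 2 * t) (Icc 0 (1 / 2)) := fun t ht => if_pos ht.2
  have hγ₂ : EqOn γ (γ₂ ∘ fun t => 2 * t - 1) (Icc (1 / 2) 1) := by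
    rintro t ⟨ht, -⟩
    rcases ht.eq_or_lt with rfl | ht
    · norm_num [hγ, h1₁, h0₂]
    · exact if_neg (not_le.2 ht)
  have hsplit : Icc (0 : ℝ) 1 = Icc 0 (1 / 2) ∪ Icc (1 / 2) 1 :=
    (Icc_union_Icc_eq_Icc (by norm_num) (by norm_num)).symm
  refine ⟨γ, ?_, ?_, by norm_num [hγ, h0₁], by norm_num [hγ, h1₂], ?_⟩
  · rw [hsplit]
    exact ((hc₁.comp (by fun_prop) hφ₁).congr hγ₁).union_of_isClosed
      ((hc₂.comp (by fun_prop) hφ₂).congr hγ₂) isClosed_Icc isClosed_Icc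
  · rw [hsplit]
    rintro t (ht | ht)
    · rw [hγ₁ ht]; exact hm₁ (hφ₁ ht)
    · rw [hγ₂ ht]; exact hm₂ (hφ₂ ht)
  · have hadd := eVariationOn.Icc_add_Icc γ (s := univ) (a := 0) (b := 1 / 2) (c := 1)
      (by norm_num) (by norm_num) (mem_univ _)
    simp only [univ_inter] at hadd
    rw [← hadd, eVariationOn.eq_of_eqOn hγ₁, eVariationOn.eq_of_eqOn hγ₂]
    gcongr
    · exact (eVariationOn.comp_le_of_monotoneOn _ _
        (fun a _ b _ hab => by linarith) hφ₁).trans hv₁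
    · exact (eVariationOn.comp_le_of_monotoneOn _ _
        (fun a _ b _ hab => by linarith) hφ₂).trans hv₂

end JoinedInLengthLE

section Segments

variable {E : Type*} [NormedAddCommGroup E] [NormedSpace ℝ E] {S : Set E}

theorem joinedInLengthLE_of_segment_subset {x y : E} (h : segment ℝ x y ⊆ S) :
    JoinedInLengthLE S (ENNReal.ofReal (dist x y)) x y := by
  refine ⟨AffineMap.lineMap x y, (AffineMap.lineMap_continuous).continuousOn, ?_,
    AffineMap.lineMap_apply_zero _ _, AffineMap.lineMap_apply_one _ _, ?_⟩
  · intro t ht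
    exact h (segment_eq_image_lineMap ℝ x y ▸ mem_image_of_mem _ ht)
  · have hid : eVariationOn (id : ℝ → ℝ) (Icc 0 1) = 1 := by simp
    calc eVariationOn (AffineMap.lineMap x y ∘ id) (Icc 0 1)
        ≤ nndist x y * eVariationOn (id : ℝ → ℝ) (Icc 0 1) :=
          (lipschitzWith_lineMap x y).lipschitzOnWith.comp_eVariationOn_le (mapsTo_univ _ _)
      _ = ENNReal.ofReal (dist x y) := by simp [hid, edist_dist]

theorem joinedInLengthLE_of_segments_subset {x p q y : E} (hxp : segment ℝ x p ⊆ S)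
    (hpq : segment ℝ p q ⊆ S) (hqy : segment ℝ q y ⊆ S) :
    JoinedInLengthLE S (ENNReal.ofReal (dist x p + dist p q + dist q y)) x y := by
  rw [ENNReal.ofReal_add (by positivity) dist_nonneg, ENNReal.ofReal_add dist_nonneg dist_nonneg]
  exact ((joinedInLengthLE_of_segment_subset hxp).trans
    (joinedInLengthLE_of_segment_subset hpq)).trans (joinedInLengthLE_of_segment_subset hqy)

end Segments

namespace lp

theorem sum_norm_apply_le_card_mul_norm {α : Type*} {E : α → Type*}
    [∀ i, NormedAddCommGroup (E i)] {p : ℝ≥0∞} (hp : p ≠ 0) (f : lp E p) (u : Finset α) :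
    ∑ i ∈ u, ‖f i‖ ≤ u.card * ‖f‖ := by
  simpa using Finset.sum_le_sum fun i (_ : i ∈ u) => norm_apply_le_norm hp f i

end lp

section Faces

variable {J : Type*} {s t r : Finset J} {x y : L2 J}

theorem stdVec_apply [DecidableEq J] (i j : J) : stdVec i j = if j = i then 1 else 0 := by
  simp [stdVec, Pi.single_apply]

theorem norm_stdVec (i : J) : ‖stdVec i‖ = 1 := by
  simp [stdVec, lp.norm_single]

theorem eq_sum_smul_stdVec (hx : ∀ i ∉ s, x i = 0) : x = ∑ i ∈ s, x i • stdVec i := by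
  classical
  ext j
  simp only [lp.coeFn_sum, Finset.sum_apply, lp.coeFn_smul, Pi.smul_apply, stdVec_apply,
    smul_eq_mul, mul_ite, mul_one, mul_zero, Finset.sum_ite_eq]
  split_ifs with hj
  · rfl
  · exact hx j hj

theorem stdVec_mem_faceSet {i : J} (hi : i ∈ s) : stdVec i ∈ faceSet s :=
  subset_convexHull ℝ _ (mem_image_of_mem _ hi)

theorem faceSet_mono (h : r ⊆ s) : faceSet r ⊆ faceSet s :=
  convexHull_mono (image_mono (Finset.coe_subset.2 h))

theorem Finset.Nonempty.of_mem_faceSet (hx : x ∈ faceSet s) : s.Nonempty := by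
  rw [Finset.nonempty_iff_ne_empty]
  rintro rfl
  simp [faceSet] at hx

theorem faceSet_subset_closedBall : faceSet s ⊆ closedBall 0 1 :=
  convexHull_min (by rintro _ ⟨i, -, rfl⟩; simp [norm_stdVec]) (convex_closedBall 0 1)

theorem dist_le_two_of_mem_faceSet (hx : x ∈ faceSet s) (hy : y ∈ faceSet t) :
    dist x y ≤ 2 := by
  have hx₁ := mem_closedBall_zero_iff.1 (faceSet_subset_closedBall hx)
  have hy₁ := mem_closedBall_zero_iff.1 (faceSet_subset_closedBall hy)
  linarith [dist_le_norm_add_norm x y]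

theorem barycentric_of_mem_faceSet (hx : x ∈ faceSet s) :
    (∀ i, 0 ≤ x i) ∧ (∀ i ∉ s, x i = 0) ∧ ∑ i ∈ s, x i = 1 := by
  classical
  suffices faceSet s ⊆ {z : L2 J | (∀ i, 0 ≤ z i) ∧ (∀ i ∉ s, z i = 0) ∧ ∑ i ∈ s, z i = 1} from
    this hx
  refine convexHull_min ?_ ?_
  · rintro _ ⟨i, hi, rfl⟩
    refine ⟨fun j => ?_, fun j hj => ?_, ?_⟩
    · rw [stdVec_apply]; positivity
    · rw [stdVec_apply, if_neg (ne_of_mem_of_not_mem hi hj).symm]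
    · simp [stdVec_apply, Finset.mem_coe.1 hi]
  · rintro z ⟨hz₀, hz, hz₁⟩ w ⟨hw₀, hw, hw₁⟩ a b ha hb hab
    have hcomb : ∀ i, (a • z + b • w) i = a * z i + b * w i := fun i => rfl
    refine ⟨fun i => ?_, fun i hi => ?_, ?_⟩ <;> simp only [hcomb]
    · have := hz₀ i; have := hw₀ i; positivity
    · simp [hz i hi, hw i hi]
    · rw [Finset.sum_add_distrib, ← Finset.mul_sum, ← Finset.mul_sum, hz₁, hw₁]
      linarith

theorem sum_sdiff_le_card_mul_dist [DecidableEq J] (hx : x ∈ faceSet s) (hy : y ∈ faceSet t) :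
    ∑ i ∈ s \ t, x i ≤ s.card * dist x y := by
  obtain ⟨hx₀, -, -⟩ := barycentric_of_mem_faceSet hx
  obtain ⟨-, hy, -⟩ := barycentric_of_mem_faceSet hy
  calc ∑ i ∈ s \ t, x i = ∑ i ∈ s \ t, ‖(x - y) i‖ :=
        Finset.sum_congr rfl fun i hi => by
          rw [lp.coeFn_sub, Pi.sub_apply, hy i (Finset.mem_sdiff.1 hi).2, sub_zero,
            Real.norm_of_nonneg (hx₀ i)]
    _ ≤ (s \ t).card * ‖x - y‖ := lp.sum_norm_apply_le_card_mul_norm two_ne_zero _ _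
    _ ≤ s.card * dist x y := by
        rw [dist_eq_norm]
        gcongr
        exact Finset.sdiff_subset

/-- The witness moves the barycentric mass of `x` outside `r` onto the vertex `e_i`. -/
theorem exists_mem_faceSet_dist_le [DecidableEq J] {i : J} (hrs : r ⊆ s) (hi : i ∈ r)
    (hx : x ∈ faceSet s) : ∃ x' ∈ faceSet r, dist x x' ≤ 2 * ∑ j ∈ s \ r, x j := by
  obtain ⟨hx₀, hx, hx₁⟩ := barycentric_of_mem_faceSet hx
  set ρ : J → J := fun j => if j ∈ r then j else i
  refine ⟨∑ j ∈ s, x j • stdVec (ρ j), ?_, ?_⟩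
  · refine (convex_convexHull ℝ _).sum_mem (fun j _ => hx₀ j) hx₁ fun j _ => ?_
    by_cases hj : j ∈ r <;> simp only [ρ, hj, if_true, if_false] <;> exact stdVec_mem_faceSet ‹_›
  · have hr : ∑ j ∈ r, (x j • stdVec j - x j • stdVec (ρ j)) = 0 :=
      Finset.sum_eq_zero fun j hj => by simp [ρ, hj]
    calc dist x _ = ‖∑ j ∈ s, (x j • stdVec j - x j • stdVec (ρ j))‖ := by
          rw [dist_eq_norm, Finset.sum_sub_distrib, ← eq_sum_smul_stdVec hx]
      _ = ‖∑ j ∈ s \ r, x j • (stdVec j - stdVec (ρ j))‖ := by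
          rw [← Finset.sum_sdiff hrs, hr, add_zero]
          simp_rw [smul_sub]
      _ ≤ ∑ j ∈ s \ r, ‖x j • (stdVec j - stdVec (ρ j))‖ := norm_sum_le _ _
      _ ≤ ∑ j ∈ s \ r, x j * 2 := Finset.sum_le_sum fun j _ => by
          rw [norm_smul, Real.norm_of_nonneg (hx₀ j)]
          have := norm_sub_le (stdVec j) (stdVec (ρ j))
          rw [norm_stdVec, norm_stdVec] at this
          exact mul_le_mul_of_nonneg_left (by linarith) (hx₀ j)
      _ = 2 * ∑ j ∈ s \ r, x j := by rw [Finset.mul_sum]; simp_rw [mul_comm]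

theorem exists_mem_faceSet_inter_dist_le [DecidableEq J] {i : J} (hi : i ∈ s ∩ t)
    (hx : x ∈ faceSet s) (hy : y ∈ faceSet t) :
    ∃ x' ∈ faceSet (s ∩ t), dist x x' ≤ 2 * s.card * dist x y := by
  obtain ⟨x', hx', hxx'⟩ := exists_mem_faceSet_dist_le Finset.inter_subset_left hi hx
  refine ⟨x', hx', hxx'.trans ?_⟩
  rw [Finset.sdiff_inter_self_left, mul_assoc]
  gcongr
  exact sum_sdiff_le_card_mul_dist hx hy

end Faces

section Skeleton

variable {J : Type*} {k : ℕ} {s t : Finset J} {x y : L2 J}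

/-- Faces with at most `k` vertices: this is the `(k - 1)`-skeleton of `Σ(J)`. -/
def cardSkeleton (J : Type*) (k : ℕ) : Set (L2 J) :=
  ⋃ (s : Finset J) (_ : s.Nonempty) (_ : s.card ≤ k), faceSet s

theorem segment_subset_cardSkeleton (hs : s.card ≤ k) (hx : x ∈ faceSet s)
    (hy : y ∈ faceSet s) : segment ℝ x y ⊆ cardSkeleton J k := fun _ hz =>
  mem_iUnion₂.2 ⟨s, .of_mem_faceSet hx,
    mem_iUnion.2 ⟨hs, (convex_convexHull ℝ _).segment_subset hx hy hz⟩⟩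

theorem joinedInLengthLE_cardSkeleton_of_inter_nonempty [DecidableEq J] (hs : s.card ≤ k)
    (ht : t.card ≤ k) (hst : (s ∩ t).Nonempty) (hx : x ∈ faceSet s) (hy : y ∈ faceSet t) :
    JoinedInLengthLE (cardSkeleton J k) (ENNReal.ofReal ((8 * k + 1) * dist x y)) x y := by
  obtain ⟨i, hi⟩ := hst
  obtain ⟨x', hx', hxx'⟩ := exists_mem_faceSet_inter_dist_le hi hx hy
  obtain ⟨y', hy', hyy'⟩ :=
    exists_mem_faceSet_inter_dist_le (by rwa [Finset.inter_comm]) hy hx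
  rw [Finset.inter_comm] at hy'
  refine (joinedInLengthLE_of_segments_subset
    (segment_subset_cardSkeleton hs hx (faceSet_mono Finset.inter_subset_left hx'))
    (segment_subset_cardSkeleton ((Finset.card_le_card Finset.inter_subset_left).trans hs)
      hx' hy')
    (segment_subset_cardSkeleton ht (faceSet_mono Finset.inter_subset_right hy') hy)).mono
    subset_rfl (ENNReal.ofReal_le_ofReal ?_)
  have hsk : (s.card : ℝ) ≤ k := by exact_mod_cast hs
  have htk : (t.card : ℝ) ≤ k := by exact_mod_cast ht
  have hd := dist_nonneg (x := x) (y := y)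
  have := dist_triangle4 x' x y y'
  rw [dist_comm x' x] at this
  rw [dist_comm y x] at hyy'
  rw [dist_comm y' y]
  nlinarith [mul_le_mul_of_nonneg_right hsk hd, mul_le_mul_of_nonneg_right htk hd]

theorem joinedInLengthLE_cardSkeleton_of_disjoint [DecidableEq J] (hk : 2 ≤ k) (hs : s.card ≤ k)
    (ht : t.card ≤ k) (hst : Disjoint s t) (hx : x ∈ faceSet s) (hy : y ∈ faceSet t) :
    JoinedInLengthLE (cardSkeleton J k) (ENNReal.ofReal (6 * k * dist x y)) x y := by
  obtain ⟨i, hi⟩ := Finset.Nonempty.of_mem_faceSet hx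
  obtain ⟨j, hj⟩ := Finset.Nonempty.of_mem_faceSet hy
  have hij : ({i, j} : Finset J).card ≤ k := Finset.card_le_two.trans hk
  have hsep : 1 ≤ k * dist x y := by
    have h := sum_sdiff_le_card_mul_dist hx hy
    rw [Finset.sdiff_eq_self_of_disjoint hst, (barycentric_of_mem_faceSet hx).2.2] at h
    have hsk : (s.card : ℝ) ≤ k := by exact_mod_cast hs
    nlinarith [dist_nonneg (x := x) (y := y)]
  refine (joinedInLengthLE_of_segments_subset
    (segment_subset_cardSkeleton hs hx (stdVec_mem_faceSet hi))
    (segment_subset_cardSkeleton hij (stdVec_mem_faceSet (Finset.mem_insert_self i {j}))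
      (stdVec_mem_faceSet (Finset.mem_insert_of_mem (Finset.mem_singleton_self j))))
    (segment_subset_cardSkeleton ht (stdVec_mem_faceSet hj) hy)).mono
    subset_rfl (ENNReal.ofReal_le_ofReal ?_)
  linarith [dist_le_two_of_mem_faceSet hx (stdVec_mem_faceSet hi),
    dist_le_two_of_mem_faceSet (stdVec_mem_faceSet hi) (stdVec_mem_faceSet hj),
    dist_le_two_of_mem_faceSet (stdVec_mem_faceSet hj) hy]

theorem quasiconvexSet_cardSkeleton (hk : 2 ≤ k) :
    QuasiconvexSet (cardSkeleton J k) (9 * k) := by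
  classical
  rintro x hx y hy
  simp only [cardSkeleton, mem_iUnion] at hx hy
  obtain ⟨s, -, hs, hx⟩ := hx
  obtain ⟨t, -, ht, hy⟩ := hy
  have hk₁ : (1 : ℝ) ≤ k := by exact_mod_cast (by omega : 1 ≤ k)
  rcases (s ∩ t).eq_empty_or_nonempty with hst | hst
  · refine (joinedInLengthLE_cardSkeleton_of_disjoint hk hs ht
      (Finset.disjoint_iff_inter_eq_empty.2 hst) hx hy).mono subset_rfl
      (ENNReal.ofReal_le_ofReal ?_)
    gcongr
    norm_num
  · refine (joinedInLengthLE_cardSkeleton_of_inter_nonempty hs ht hst hx hy).mono subset_rfl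
      (ENNReal.ofReal_le_ofReal ?_)
    gcongr
    linarith

end Skeleton

/-- For every `n` there is `C = C(n) ≥ 1` such that for every nonempty index
set `J` the underlying set of the `(n+1)`-skeleton of the full complex `Σ(J)` (with the
`ℓ₂`-metric) is `C`-quasiconvex: any two of its points are joined by a continuous curve inside
it of length at most `C` times their distance. -/
theorem stmt_12 (n : ℕ) :
    ∃ C : ℝ, 1 ≤ C ∧
      ∀ (J : Type u), Nonempty J →
        QuasiconvexSet
          (⋃ (s : Finset J) (_ : s.Nonempty) (_ : s.card ≤ n + 2), faceSet s) C :=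
  ⟨9 * (n + 2 : ℕ), by norm_cast; omega, fun J _ => quasiconvexSet_cardSkeleton (by omega)⟩
end
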